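/- arXiv:2405.15228 — 4 statements merged into one kernel-verified Lean document; each statement's English description precedes it below -/
import Mathlib

section
/- (Theorem 3, pointwise joint form.) Assume (H1): for every i, P({Y = i} ∩ {Ȳ = i} ∩ {S = true}) = P({Ȳ = i} ∩ {S = true}), and (H2): P({Y = Ȳ} ∩ {S = false}) = 0. Then for every loss vector ℓ : Fin K → ℝ, the classification risk satisfies ∑_{i} P({Y = i}) · ℓ(i) = ∑_{j} ∑_{i ≠ j} P({Y = i} ∩ {Ȳ = j} ∩ {S = false}) · ℓ(i) + ∑_{i} P({Ȳ = i} ∩ {S = true}) · ℓ(i), where all sums range over Fin K (with i ≠ j in the inner sum). -/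
open MeasureTheory ProbabilityTheory
open scoped ENNReal

theorem stmt_5 {Ω : Type*} [MeasurableSpace Ω] (P : Measure Ω) [IsProbabilityMeasure P]
    {K : ℕ} (hK : 2 ≤ K) (Y Ybar : Ω → Fin K) (S : Ω → Bool)
    (hY : ∀ i : Fin K, MeasurableSet {ω | Y ω = i})
    (hYbar : ∀ i : Fin K, MeasurableSet {ω | Ybar ω = i})
    (hS : ∀ b : Bool, MeasurableSet {ω | S ω = b})
    (H1 : ∀ i : Fin K,
      P ({ω | Y ω = i} ∩ {ω | Ybar ω = i} ∩ {ω | S ω = true})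
        = P ({ω | Ybar ω = i} ∩ {ω | S ω = true}))
    (H2 : P ({ω | Y ω = Ybar ω} ∩ {ω | S ω = false}) = 0) :
    ∀ ℓ : Fin K → ℝ,
      ∑ i : Fin K, (P {ω | Y ω = i}).toReal * ℓ i
        = (∑ j : Fin K, ∑ i ∈ Finset.univ.filter (fun i : Fin K => i ≠ j),
              (P ({ω | Y ω = i} ∩ {ω | Ybar ω = j} ∩ {ω | S ω = false})).toReal * ℓ i)
          + ∑ i : Fin K, (P ({ω | Ybar ω = i} ∩ {ω | S ω = true})).toReal * ℓ i := by
  intro ℓ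
  -- partition by S
  have partS : ∀ (A : Set Ω), P A = P (A ∩ {ω | S ω = false}) + P (A ∩ {ω | S ω = true}) := by
    intro A
    have h := measure_inter_add_diff (μ := P) A (hS true)
    have hdiff : A \ {ω | S ω = true} = A ∩ {ω | S ω = false} := by
      ext ω; cases h : S ω <;> simp [h]
    rw [hdiff] at h
    rw [add_comm] at h
    exact h.symm
  -- partition by Ybar
  have partYbar : ∀ (B : Set Ω), MeasurableSet B →
      P B = ∑ j : Fin K, P (B ∩ {ω | Ybar ω = j}) := by
    intro B hB
    have hU : B = ⋃ j : Fin K, B ∩ {ω | Ybar ω = j} := by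
      ext ω
      simp only [Set.mem_iUnion, Set.mem_inter_iff, Set.mem_setOf_eq]
      exact ⟨fun h => ⟨Ybar ω, h, rfl⟩, fun ⟨j, h, _⟩ => h⟩
    have hdisj : Pairwise (Function.onFun Disjoint fun j : Fin K => B ∩ {ω | Ybar ω = j}) := by
      intro a b hab
      refine Set.disjoint_left.2 ?_
      rintro ω ⟨-, ha⟩ ⟨-, hb⟩
      exact hab (ha.symm.trans hb)
    calc P B = P (⋃ j : Fin K, B ∩ {ω | Ybar ω = j}) := by rw [← hU]
      _ = ∑' j : Fin K, P (B ∩ {ω | Ybar ω = j}) :=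
          measure_iUnion hdisj fun j => hB.inter (hYbar j)
      _ = ∑ j : Fin K, P (B ∩ {ω | Ybar ω = j}) := tsum_fintype _
  -- diagonal false terms are zero
  have falseDiag : ∀ i : Fin K,
      P ({ω | Y ω = i} ∩ {ω | Ybar ω = i} ∩ {ω | S ω = false}) = 0 := by
    intro i
    refine measure_mono_null ?_ H2
    rintro ω ⟨⟨h1, h2⟩, h3⟩
    exact ⟨h1.trans h2.symm, h3⟩
  -- off-diagonal true terms are zero
  have trueOff : ∀ i j : Fin K, i ≠ j →
      P ({ω | Y ω = i} ∩ {ω | Ybar ω = j} ∩ {ω | S ω = true}) = 0 := by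
    intro i j hij
    set B : Set Ω := {ω | Ybar ω = j} ∩ {ω | S ω = true} with hBdef
    have hB : MeasurableSet B := (hYbar j).inter (hS true)
    have h := measure_inter_add_diff (μ := P) B (hY j)
    have hBset : B ∩ {ω | Y ω = j} = {ω | Y ω = j} ∩ {ω | Ybar ω = j} ∩ {ω | S ω = true} := by
      ext ω; simp [hBdef, Set.mem_inter_iff]; tauto
    rw [hBset, H1 j] at h
    have hzero : P (B \ {ω | Y ω = j}) = 0 := by
      have hfin : P B ≠ ⊤ := measure_ne_top P B
      nth_rewrite 2 [← add_zero (P B)] at h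
      exact (ENNReal.add_right_inj hfin).1 h
    refine measure_mono_null ?_ hzero
    rintro ω ⟨⟨h1, h2⟩, h3⟩
    exact ⟨⟨h2, h3⟩, fun hYj => hij (h1.symm.trans hYj)⟩
  -- key decomposition of P {Y = i}
  have key : ∀ i : Fin K,
      P {ω | Y ω = i}
        = (∑ j ∈ Finset.univ.filter (fun j : Fin K => j ≠ i),
            P ({ω | Y ω = i} ∩ {ω | Ybar ω = j} ∩ {ω | S ω = false}))
          + P ({ω | Ybar ω = i} ∩ {ω | S ω = true}) := by
    intro i
    rw [partS {ω | Y ω = i}]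
    congr 1
    · rw [partYbar ({ω | Y ω = i} ∩ {ω | S ω = false}) ((hY i).inter (hS false))]
      have hre : ∀ j : Fin K,
          {ω | Y ω = i} ∩ {ω | S ω = false} ∩ {ω | Ybar ω = j}
            = {ω | Y ω = i} ∩ {ω | Ybar ω = j} ∩ {ω | S ω = false} := by
        intro j; ext ω; simp [Set.mem_inter_iff]; tauto
      simp_rw [hre]
      rw [← Finset.sum_filter_add_sum_filter_not Finset.univ (fun j : Fin K => j ≠ i)]
      have : ∑ j ∈ Finset.univ.filter (fun j : Fin K => ¬ j ≠ i),
          P ({ω | Y ω = i} ∩ {ω | Ybar ω = j} ∩ {ω | S ω = false}) = 0 := by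
        apply Finset.sum_eq_zero
        intro j hj
        simp only [Finset.mem_filter, not_not] at hj
        rw [hj.2]
        exact falseDiag i
      rw [this, add_zero]
    · rw [partYbar ({ω | Y ω = i} ∩ {ω | S ω = true}) ((hY i).inter (hS true))]
      have hre : ∀ j : Fin K,
          {ω | Y ω = i} ∩ {ω | S ω = true} ∩ {ω | Ybar ω = j}
            = {ω | Y ω = i} ∩ {ω | Ybar ω = j} ∩ {ω | S ω = true} := by
        intro j; ext ω; simp [Set.mem_inter_iff]; tauto
      simp_rw [hre]
      rw [Finset.sum_eq_single i]
      · exact H1 i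
      · intro j _ hj
        exact trueOff i j (fun h => hj h.symm)
      · intro h; exact absurd (Finset.mem_univ i) h
  -- now convert to reals
  have keyR : ∀ i : Fin K,
      (P {ω | Y ω = i}).toReal
        = (∑ j ∈ Finset.univ.filter (fun j : Fin K => j ≠ i),
            (P ({ω | Y ω = i} ∩ {ω | Ybar ω = j} ∩ {ω | S ω = false})).toReal)
          + (P ({ω | Ybar ω = i} ∩ {ω | S ω = true})).toReal := by
    intro i
    rw [key i, ENNReal.toReal_add, ENNReal.toReal_sum]
    · intro j _; exact measure_ne_top P _
    · exact ENNReal.sum_ne_top.2 fun j _ => measure_ne_top P _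
    · exact measure_ne_top P _
  calc ∑ i : Fin K, (P {ω | Y ω = i}).toReal * ℓ i
      = ∑ i : Fin K, ((∑ j ∈ Finset.univ.filter (fun j : Fin K => j ≠ i),
            (P ({ω | Y ω = i} ∩ {ω | Ybar ω = j} ∩ {ω | S ω = false})).toReal * ℓ i)
          + (P ({ω | Ybar ω = i} ∩ {ω | S ω = true})).toReal * ℓ i) := by
        apply Finset.sum_congr rfl
        intro i _
        rw [keyR i, add_mul, Finset.sum_mul]
    _ = (∑ i : Fin K, ∑ j ∈ Finset.univ.filter (fun j : Fin K => j ≠ i),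
            (P ({ω | Y ω = i} ∩ {ω | Ybar ω = j} ∩ {ω | S ω = false})).toReal * ℓ i)
          + ∑ i : Fin K, (P ({ω | Ybar ω = i} ∩ {ω | S ω = true})).toReal * ℓ i := by
        rw [Finset.sum_add_distrib]
    _ = (∑ j : Fin K, ∑ i ∈ Finset.univ.filter (fun i : Fin K => i ≠ j),
            (P ({ω | Y ω = i} ∩ {ω | Ybar ω = j} ∩ {ω | S ω = false})).toReal * ℓ i)
          + ∑ i : Fin K, (P ({ω | Ybar ω = i} ∩ {ω | S ω = true})).toReal * ℓ i := by
        congr 1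
        simp_rw [Finset.sum_filter]
        rw [Finset.sum_comm]
        apply Finset.sum_congr rfl
        intro j _
        apply Finset.sum_congr rfl
        intro i _
        congr 1
        simp [ne_comm]
end

section
/- (Theorem 3, conditional form.) Assume (H1): for every i, P({Y = i} ∩ {Ȳ = i} ∩ {S = true}) = P({Ȳ = i} ∩ {S = true}), and (H2): P({Y = Ȳ} ∩ {S = false}) = 0. Then for every loss vector ℓ : Fin K → ℝ, ∑_{i} P({Y = i}) · ℓ(i) = ∑_{j} P({Ȳ = j} ∩ {S = false}) · ( ∑_{i ≠ j} P[{Y = i} | {Ȳ = j} ∩ {S = false}] · ℓ(i) ) + ∑_{i} P({Ȳ = i} ∩ {S = true}) · ℓ(i), where all sums range over Fin K (with i ≠ j in the inner sum). -/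
open MeasureTheory ProbabilityTheory
open scoped ENNReal

theorem stmt_6 {Ω : Type*} [MeasurableSpace Ω] (P : Measure Ω) [IsProbabilityMeasure P]
    {K : ℕ} (hK : 2 ≤ K) (Y Ybar : Ω → Fin K) (S : Ω → Bool)
    (hY : ∀ i : Fin K, MeasurableSet {ω | Y ω = i})
    (hYbar : ∀ i : Fin K, MeasurableSet {ω | Ybar ω = i})
    (hS : ∀ b : Bool, MeasurableSet {ω | S ω = b})
    (H1 : ∀ i : Fin K,
      P ({ω | Y ω = i} ∩ {ω | Ybar ω = i} ∩ {ω | S ω = true})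
        = P ({ω | Ybar ω = i} ∩ {ω | S ω = true}))
    (H2 : P ({ω | Y ω = Ybar ω} ∩ {ω | S ω = false}) = 0) :
    ∀ ℓ : Fin K → ℝ,
      ∑ i : Fin K, (P {ω | Y ω = i}).toReal * ℓ i
        = (∑ j : Fin K, (P ({ω | Ybar ω = j} ∩ {ω | S ω = false})).toReal
              * (∑ i ∈ Finset.univ.filter (fun i : Fin K => i ≠ j),
                  (P[{ω | Y ω = i} | {ω | Ybar ω = j} ∩ {ω | S ω = false}]).toReal * ℓ i))
          + ∑ i : Fin K, (P ({ω | Ybar ω = i} ∩ {ω | S ω = true})).toReal * ℓ i := by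
  intro ℓ
  have hBf : ∀ j : Fin K, MeasurableSet ({ω | Ybar ω = j} ∩ {ω | S ω = false}) :=
    fun j => (hYbar j).inter (hS false)
  -- conditional probability times base probability equals joint probability
  have hcond : ∀ i j : Fin K,
      (P[{ω | Y ω = i} | {ω | Ybar ω = j} ∩ {ω | S ω = false}]).toReal
        * (P ({ω | Ybar ω = j} ∩ {ω | S ω = false})).toReal
      = (P ({ω | Y ω = i} ∩ {ω | Ybar ω = j} ∩ {ω | S ω = false})).toReal := by
    intro i j
    rw [cond_apply (hBf j) P]
    set B := {ω | Ybar ω = j} ∩ {ω | S ω = false} with hB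
    have hBeq : {ω | Y ω = i} ∩ {ω | Ybar ω = j} ∩ {ω | S ω = false}
        = B ∩ {ω | Y ω = i} := by
      rw [Set.inter_assoc, Set.inter_comm]
    rw [hBeq]
    rcases eq_or_ne (P B) 0 with h0 | h0
    · have h1 : P (B ∩ {ω | Y ω = i}) = 0 :=
        measure_mono_null Set.inter_subset_left h0
      simp [h0, h1]
    · have hfin : P B ≠ ⊤ := measure_ne_top P B
      have htr : (P B).toReal ≠ 0 := ENNReal.toReal_ne_zero.2 ⟨h0, hfin⟩
      rw [ENNReal.toReal_mul, ENNReal.toReal_inv]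
      field_simp
  -- decomposition of P {Y = i}
  have hpart : ∀ i : Fin K, (P {ω | Y ω = i}).toReal
      = ∑ j : Fin K,
          ((P ({ω | Y ω = i} ∩ {ω | Ybar ω = j} ∩ {ω | S ω = false})).toReal
            + (P ({ω | Y ω = i} ∩ {ω | Ybar ω = j} ∩ {ω | S ω = true})).toReal) := by
    intro i
    have h1 : P {ω | Y ω = i} = ∑ j : Fin K, P ({ω | Y ω = i} ∩ {ω | Ybar ω = j}) := by
      rw [← measure_biUnion_finset]
      · congr 1
        ext ω
        simp [Set.mem_iUnion]
      · intro a _ b _ hab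
        refine Set.disjoint_left.2 fun ω hωa hωb => hab ?_
        have := hωa.2.symm.trans hωb.2
        exact this
      · exact fun b _ => (hY i).inter (hYbar b)
    have h2 : ∀ j : Fin K, P ({ω | Y ω = i} ∩ {ω | Ybar ω = j})
        = P ({ω | Y ω = i} ∩ {ω | Ybar ω = j} ∩ {ω | S ω = false})
          + P ({ω | Y ω = i} ∩ {ω | Ybar ω = j} ∩ {ω | S ω = true}) := by
      intro j
      have := measure_inter_add_diff ({ω | Y ω = i} ∩ {ω | Ybar ω = j}) (hS true) (μ := P)
      have hd : ({ω | Y ω = i} ∩ {ω | Ybar ω = j}) \ {ω | S ω = true}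
          = {ω | Y ω = i} ∩ {ω | Ybar ω = j} ∩ {ω | S ω = false} := by
        ext ω
        simp [Set.mem_diff, and_assoc]
      rw [hd] at this
      rw [← this]
      ring
    rw [h1]
    rw [Finset.sum_congr rfl fun j _ => h2 j]
    rw [ENNReal.toReal_sum fun j _ => by
      exact ENNReal.add_ne_top.2 ⟨measure_ne_top P _, measure_ne_top P _⟩]
    exact Finset.sum_congr rfl fun j _ => ENNReal.toReal_add (measure_ne_top P _) (measure_ne_top P _)
  -- diagonal false terms vanish
  have hdiagf : ∀ j : Fin K,
      P ({ω | Y ω = j} ∩ {ω | Ybar ω = j} ∩ {ω | S ω = false}) = 0 := by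
    intro j
    refine measure_mono_null (fun ω hω => ?_) H2
    exact ⟨hω.1.1.trans hω.1.2.symm, hω.2⟩
  -- off-diagonal true terms vanish
  have hofft : ∀ i j : Fin K, i ≠ j →
      P ({ω | Y ω = i} ∩ {ω | Ybar ω = j} ∩ {ω | S ω = true}) = 0 := by
    intro i j hij
    have hdiff : P (({ω | Ybar ω = j} ∩ {ω | S ω = true})
        \ ({ω | Y ω = j} ∩ {ω | Ybar ω = j} ∩ {ω | S ω = true})) = 0 := by
      have hsub : ({ω | Y ω = j} ∩ {ω | Ybar ω = j} ∩ {ω | S ω = true})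
          ⊆ ({ω | Ybar ω = j} ∩ {ω | S ω = true}) := fun ω hω => ⟨hω.1.2, hω.2⟩
      rw [measure_diff hsub
        (((hY j).inter (hYbar j)).inter (hS true)).nullMeasurableSet (measure_ne_top P _),
        H1 j, tsub_self]
    refine measure_mono_null (fun ω hω => ?_) hdiff
    simp only [Set.mem_diff]
    exact ⟨⟨hω.1.2, hω.2⟩, fun h => hij (hω.1.1.symm.trans h.1.1)⟩
  -- now the sum manipulation
  have hLHS : ∑ i : Fin K, (P {ω | Y ω = i}).toReal * ℓ i
      = (∑ j : Fin K, ∑ i : Fin K,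
          (P ({ω | Y ω = i} ∩ {ω | Ybar ω = j} ∩ {ω | S ω = false})).toReal * ℓ i)
        + ∑ i : Fin K, (P ({ω | Ybar ω = i} ∩ {ω | S ω = true})).toReal * ℓ i := by
    calc ∑ i : Fin K, (P {ω | Y ω = i}).toReal * ℓ i
        = ∑ i : Fin K, ∑ j : Fin K,
            ((P ({ω | Y ω = i} ∩ {ω | Ybar ω = j} ∩ {ω | S ω = false})).toReal * ℓ i
              + (P ({ω | Y ω = i} ∩ {ω | Ybar ω = j} ∩ {ω | S ω = true})).toReal * ℓ i) := by
          refine Finset.sum_congr rfl fun i _ => ?_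
          rw [hpart i, Finset.sum_mul]
          exact Finset.sum_congr rfl fun j _ => add_mul _ _ _
      _ = (∑ i : Fin K, ∑ j : Fin K,
            (P ({ω | Y ω = i} ∩ {ω | Ybar ω = j} ∩ {ω | S ω = false})).toReal * ℓ i)
          + ∑ i : Fin K, ∑ j : Fin K,
            (P ({ω | Y ω = i} ∩ {ω | Ybar ω = j} ∩ {ω | S ω = true})).toReal * ℓ i := by
          rw [← Finset.sum_add_distrib]
          exact Finset.sum_congr rfl fun i _ => Finset.sum_add_distrib
      _ = (∑ j : Fin K, ∑ i : Fin K,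
            (P ({ω | Y ω = i} ∩ {ω | Ybar ω = j} ∩ {ω | S ω = false})).toReal * ℓ i)
          + ∑ i : Fin K, (P ({ω | Ybar ω = i} ∩ {ω | S ω = true})).toReal * ℓ i := by
          rw [Finset.sum_comm]
          congr 1
          refine Finset.sum_congr rfl fun i _ => ?_
          rw [Finset.sum_eq_single i]
          · rw [H1 i]
          · intro j _ hji
            rw [hofft i j (Ne.symm hji), ENNReal.toReal_zero, zero_mul]
          · intro h
            exact absurd (Finset.mem_univ i) h
  rw [hLHS]
  congr 1
  refine Finset.sum_congr rfl fun j _ => ?_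
  rw [Finset.mul_sum]
  have hsplit : ∑ i : Fin K,
      (P ({ω | Y ω = i} ∩ {ω | Ybar ω = j} ∩ {ω | S ω = false})).toReal * ℓ i
      = ∑ i ∈ Finset.univ.filter (fun i : Fin K => i ≠ j),
          (P ({ω | Y ω = i} ∩ {ω | Ybar ω = j} ∩ {ω | S ω = false})).toReal * ℓ i := by
    rw [Finset.filter_ne', ← Finset.sum_erase_add _ _ (Finset.mem_univ j),
      hdiagf j, ENNReal.toReal_zero, zero_mul, add_zero]
  rw [hsplit]
  refine Finset.sum_congr rfl fun i _ => ?_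
  rw [← hcond i j]
  ring
end

section
/- (Theorem 3, full form with a feature variable.) Let 𝒳 be a finite nonempty type and X : Ω → 𝒳 a random variable (with measurable preimages). Assume (H1'): P({S = true} ∩ {Y ≠ Ȳ}) = 0, and (H2): P({S = false} ∩ {Y = Ȳ}) = 0. Then for every function ℓ : 𝒳 → Fin K → ℝ, ∑_{x ∈ 𝒳} ∑_{i} P({X = x} ∩ {Y = i}) · ℓ(x, i) = ∑_{x ∈ 𝒳} ∑_{j} ∑_{i ≠ j} P({X = x} ∩ {Y = i} ∩ {Ȳ = j} ∩ {S = false}) · ℓ(x, i) + ∑_{x ∈ 𝒳} ∑_{i} P({X = x} ∩ {Ȳ = i} ∩ {S = true}) · ℓ(x, i), where label sums range over Fin K (with i ≠ j in the inner sum). -/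
open MeasureTheory ProbabilityTheory
open scoped ENNReal

theorem stmt_7 {Ω : Type*} [MeasurableSpace Ω] (P : Measure Ω) [IsProbabilityMeasure P]
    {K : ℕ} (hK : 2 ≤ K) (Y Ybar : Ω → Fin K) (S : Ω → Bool)
    (hY : ∀ i : Fin K, MeasurableSet {ω | Y ω = i})
    (hYbar : ∀ i : Fin K, MeasurableSet {ω | Ybar ω = i})
    (hS : ∀ b : Bool, MeasurableSet {ω | S ω = b})
    {𝒳 : Type*} [Fintype 𝒳] [Nonempty 𝒳] (X : Ω → 𝒳)
    (hX : ∀ x : 𝒳, MeasurableSet {ω | X ω = x})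
    (H1' : P ({ω | S ω = true} ∩ {ω | Y ω ≠ Ybar ω}) = 0)
    (H2 : P ({ω | S ω = false} ∩ {ω | Y ω = Ybar ω}) = 0) :
    ∀ ℓ : 𝒳 → Fin K → ℝ,
      ∑ x : 𝒳, ∑ i : Fin K, (P ({ω | X ω = x} ∩ {ω | Y ω = i})).toReal * ℓ x i
        = (∑ x : 𝒳, ∑ j : Fin K, ∑ i ∈ Finset.univ.filter (fun i : Fin K => i ≠ j),
              (P ({ω | X ω = x} ∩ {ω | Y ω = i} ∩ {ω | Ybar ω = j}
                ∩ {ω | S ω = false})).toReal * ℓ x i)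
          + ∑ x : 𝒳, ∑ i : Fin K,
              (P ({ω | X ω = x} ∩ {ω | Ybar ω = i} ∩ {ω | S ω = true})).toReal * ℓ x i := by
  intro ℓ
  have key : ∀ (x : 𝒳) (i : Fin K),
      P ({ω | X ω = x} ∩ {ω | Y ω = i})
        = (∑ j ∈ Finset.univ.filter (fun j : Fin K => j ≠ i),
            P ({ω | X ω = x} ∩ {ω | Y ω = i} ∩ {ω | Ybar ω = j} ∩ {ω | S ω = false}))
          + P ({ω | X ω = x} ∩ {ω | Ybar ω = i} ∩ {ω | S ω = true}) := by
    intro x i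
    set A := {ω | X ω = x} ∩ {ω | Y ω = i} with hA
    have hAmeas : MeasurableSet A := (hX x).inter (hY i)
    -- split by S
    have hsplit : P A = P (A ∩ {ω | S ω = false}) + P (A ∩ {ω | S ω = true}) := by
      have hdisj : Disjoint (A ∩ {ω | S ω = false}) (A ∩ {ω | S ω = true}) := by
        apply Set.disjoint_left.2
        rintro ω ⟨_, h1⟩ ⟨_, h2⟩
        simp_all
      have hunion : (A ∩ {ω | S ω = false}) ∪ (A ∩ {ω | S ω = true}) = A := by
        ext ω; rcases Bool.eq_false_or_eq_true (S ω) with h | h <;> simp [h]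
      have h := measure_union (μ := P) hdisj (hAmeas.inter (hS true))
      rw [hunion] at h
      exact h
    -- partition the S = false part by Ybar
    have hfalse : P (A ∩ {ω | S ω = false})
        = ∑ j : Fin K, P (A ∩ {ω | Ybar ω = j} ∩ {ω | S ω = false}) := by
      have hunion : A ∩ {ω | S ω = false}
          = ⋃ j : Fin K, (A ∩ {ω | Ybar ω = j} ∩ {ω | S ω = false}) := by
        ext ω
        simp only [Set.mem_iUnion, Set.mem_inter_iff, Set.mem_setOf_eq]
        constructor
        · rintro ⟨hω, hs⟩; exact ⟨Ybar ω, ⟨hω, rfl⟩, hs⟩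
        · rintro ⟨j, ⟨hω, _⟩, hs⟩; exact ⟨hω, hs⟩
      rw [hunion, measure_iUnion ?_ ?_]
      · exact tsum_fintype _
      · intro j k hjk
        apply Set.disjoint_left.2
        rintro ω ⟨⟨_, h1⟩, _⟩ ⟨⟨_, h2⟩, _⟩
        exact hjk (by simp_all)
      · intro j; exact (hAmeas.inter (hYbar j)).inter (hS false)
    have hterm_i : P (A ∩ {ω | Ybar ω = i} ∩ {ω | S ω = false}) = 0 := by
      refine measure_mono_null ?_ H2
      rintro ω ⟨⟨⟨_, hy⟩, hyb⟩, hs⟩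
      exact ⟨hs, by simp_all⟩
    have hfalse' : P (A ∩ {ω | S ω = false})
        = ∑ j ∈ Finset.univ.filter (fun j : Fin K => j ≠ i),
            P (A ∩ {ω | Ybar ω = j} ∩ {ω | S ω = false}) := by
      rw [hfalse]
      have h := Finset.sum_filter_add_sum_filter_not Finset.univ (fun j : Fin K => j ≠ i)
        (fun j => P (A ∩ {ω | Ybar ω = j} ∩ {ω | S ω = false}))
      have hz : ∑ j ∈ Finset.univ.filter (fun j : Fin K => ¬ j ≠ i),
          P (A ∩ {ω | Ybar ω = j} ∩ {ω | S ω = false}) = 0 := by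
        refine Finset.sum_eq_zero fun j hj => ?_
        rcases Finset.mem_filter.1 hj with ⟨_, hj⟩
        rw [not_not.1 hj]
        exact hterm_i
      rw [← h, hz, add_zero]
    -- S = true part : Y can be replaced by Ybar
    have htrue : P (A ∩ {ω | S ω = true})
        = P ({ω | X ω = x} ∩ {ω | Ybar ω = i} ∩ {ω | S ω = true}) := by
      apply measure_congr
      rw [MeasureTheory.ae_eq_set]
      constructor
      · refine measure_mono_null ?_ H1'
        rintro ω ⟨⟨⟨hx', hy⟩, hs⟩, hnot⟩
        refine ⟨hs, fun heq => hnot ⟨⟨hx', ?_⟩, hs⟩⟩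
        simp only [Set.mem_setOf_eq] at hy ⊢
        rw [← heq, hy]
      · refine measure_mono_null ?_ H1'
        rintro ω ⟨⟨⟨hx', hyb⟩, hs⟩, hnot⟩
        refine ⟨hs, fun heq => hnot ⟨⟨hx', ?_⟩, hs⟩⟩
        simp only [Set.mem_setOf_eq] at hyb ⊢
        rw [heq, hyb]
    rw [hsplit, hfalse', htrue]
  -- now convert to real numbers and assemble
  have hne : ∀ s : Set Ω, P s ≠ ⊤ := fun s => measure_ne_top P s
  have keyR : ∀ (x : 𝒳) (i : Fin K),
      (P ({ω | X ω = x} ∩ {ω | Y ω = i})).toReal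
        = (∑ j ∈ Finset.univ.filter (fun j : Fin K => j ≠ i),
            (P ({ω | X ω = x} ∩ {ω | Y ω = i} ∩ {ω | Ybar ω = j} ∩ {ω | S ω = false})).toReal)
          + (P ({ω | X ω = x} ∩ {ω | Ybar ω = i} ∩ {ω | S ω = true})).toReal := by
    intro x i
    rw [key x i, ENNReal.toReal_add (by
        exact (ENNReal.sum_lt_top.2 (fun j _ => (hne _).lt_top)).ne) (hne _),
      ENNReal.toReal_sum (fun j _ => hne _)]
  calc ∑ x : 𝒳, ∑ i : Fin K, (P ({ω | X ω = x} ∩ {ω | Y ω = i})).toReal * ℓ x i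
      = ∑ x : 𝒳, ∑ i : Fin K,
          ((∑ j ∈ Finset.univ.filter (fun j : Fin K => j ≠ i),
            (P ({ω | X ω = x} ∩ {ω | Y ω = i} ∩ {ω | Ybar ω = j} ∩ {ω | S ω = false})).toReal
              * ℓ x i)
          + (P ({ω | X ω = x} ∩ {ω | Ybar ω = i} ∩ {ω | S ω = true})).toReal * ℓ x i) := by
        refine Finset.sum_congr rfl fun x _ => Finset.sum_congr rfl fun i _ => ?_
        rw [keyR x i, add_mul, Finset.sum_mul]
    _ = (∑ x : 𝒳, ∑ i : Fin K, ∑ j ∈ Finset.univ.filter (fun j : Fin K => j ≠ i),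
            (P ({ω | X ω = x} ∩ {ω | Y ω = i} ∩ {ω | Ybar ω = j} ∩ {ω | S ω = false})).toReal
              * ℓ x i)
          + ∑ x : 𝒳, ∑ i : Fin K,
              (P ({ω | X ω = x} ∩ {ω | Ybar ω = i} ∩ {ω | S ω = true})).toReal * ℓ x i := by
        rw [← Finset.sum_add_distrib]
        refine Finset.sum_congr rfl fun x _ => ?_
        rw [← Finset.sum_add_distrib]
    _ = _ := by
        congr 1
        refine Finset.sum_congr rfl fun x _ => ?_
        simp only [Finset.sum_filter]
        rw [Finset.sum_comm]
        refine Finset.sum_congr rfl fun j _ => Finset.sum_congr rfl fun i _ => ?_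
        by_cases h : i = j
        · simp [h]
        · simp [h, Ne.symm h]
end

section
/- (Risk consistency of the TF surrogate loss.) Assume (H1): for every i, P({Y = i} ∩ {Ȳ = i} ∩ {S = true}) = P({Ȳ = i} ∩ {S = true}), and (H2): P({Y = Ȳ} ∩ {S = false}) = 0. For a loss vector ℓ : Fin K → ℝ, define the surrogate random variable G : Ω → ℝ by G(ω) = ℓ(Ȳ(ω)) if S(ω) = true, and G(ω) = ∑_{i ≠ Ȳ(ω)} P[{Y = i} | {Ȳ = Ȳ(ω)} ∩ {S = false}] · ℓ(i) if S(ω) = false. Then E[G] = ∑_{i} P({Y = i}) · ℓ(i); that is, the expectation of the True-False surrogate loss equals the ordinary classification risk. -/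
open MeasureTheory ProbabilityTheory

/-! The surrogate loss depends on `ω` only through the cell `(Ȳ ω, S ω)` of a finite partition, and
on every cell its value times the cell's mass is the `ℓ ∘ Y`-mass of that cell: on a 'True' cell
because (H1) forces `Y = Ȳ` almost surely there, on a 'False' cell by the definition of conditional
probability, the omitted term `i = Ȳ` being null by (H2). Summing over the cells gives the risk. -/

section FinitePartition

variable {Ω α β : Type*} [MeasurableSpace Ω] {P : Measure Ω} [IsFiniteMeasure P]
  [Fintype α] [MeasurableSpace α] [MeasurableSingletonClass α] {Z : Ω → α}

lemma integral_comp_eq_sum_measureReal_preimage (hZ : Measurable Z) (g : α → ℝ) :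
    ∫ ω, g (Z ω) ∂P = ∑ z, P.real (Z ⁻¹' {z}) * g z := by
  rw [← integral_map hZ.aemeasurable (measurable_of_finite g).aestronglyMeasurable,
    integral_fintype Integrable.of_finite]
  simp [map_measureReal_apply hZ (measurableSet_singleton _)]

lemma sum_measureReal_inter_preimage (hZ : Measurable Z) (A : Set Ω) :
    ∑ z, P.real (A ∩ Z ⁻¹' {z}) = P.real A := by
  have h := sum_measure_preimage_singleton (μ := P.restrict A) Finset.univ
    fun z _ => hZ (measurableSet_singleton z)
  simp only [Finset.coe_univ, Set.preimage_univ, Measure.restrict_apply_univ,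
    Measure.restrict_apply (hZ (measurableSet_singleton _))] at h
  simp only [Measure.real, ← ENNReal.toReal_sum fun z _ => measure_ne_top P _, Set.inter_comm A, h]

theorem integral_comp_eq_sum_of_cell_averages [Fintype β] {Y : Ω → β} (hZ : Measurable Z)
    (g : α → ℝ) (ℓ : β → ℝ)
    (hg : ∀ z, P.real (Z ⁻¹' {z}) * g z = ∑ i, P.real (Y ⁻¹' {i} ∩ Z ⁻¹' {z}) * ℓ i) :
    ∫ ω, g (Z ω) ∂P = ∑ i, P.real (Y ⁻¹' {i}) * ℓ i := by
  simp only [integral_comp_eq_sum_measureReal_preimage hZ, hg]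
  rw [Finset.sum_comm]
  simp only [← Finset.sum_mul, sum_measureReal_inter_preimage hZ]

end FinitePartition

section Cells

variable {Ω β : Type*} [MeasurableSpace Ω] {P : Measure Ω} [IsFiniteMeasure P]

lemma measureReal_mul_toReal_cond {C : Set Ω} (hC : MeasurableSet C) (A : Set Ω) :
    P.real C * (P[A | C]).toReal = P.real (A ∩ C) := by
  rw [Measure.real, ← ENNReal.toReal_mul, mul_comm, cond_mul_eq_inter hC, Set.inter_comm]
  rfl

lemma sum_measureReal_inter_mul_of_measure_inter_eq [Fintype β] {Y : Ω → β} {C : Set Ω} {j : β}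
    (hYj : MeasurableSet (Y ⁻¹' {j})) (h : P (Y ⁻¹' {j} ∩ C) = P C) (ℓ : β → ℝ) :
    ∑ i, P.real (Y ⁻¹' {i} ∩ C) * ℓ i = P.real C * ℓ j := by
  have hnull : P (C \ Y ⁻¹' {j}) = 0 := by
    have h' := measure_inter_add_sdiff (μ := P) C hYj
    rw [Set.inter_comm, h] at h'
    exact (ENNReal.add_right_inj (measure_ne_top P C)).1 (h'.trans (add_zero _).symm)
  rw [Fintype.sum_eq_single j fun i hij => ?_, Measure.real, h]
  · rfl
  · refine mul_eq_zero_of_left ((measureReal_eq_zero_iff).2 (measure_mono_null ?_ hnull)) _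
    rintro ω ⟨rfl, hω⟩
    exact ⟨hω, hij⟩

end Cells

theorem stmt_8_general {Ω : Type*} [MeasurableSpace Ω] (P : Measure Ω) [IsProbabilityMeasure P]
    {K : ℕ} (Y Ybar : Ω → Fin K) (S : Ω → Bool)
    (hY : ∀ i : Fin K, MeasurableSet {ω | Y ω = i})
    (hYbar : ∀ i : Fin K, MeasurableSet {ω | Ybar ω = i})
    (hS : ∀ b : Bool, MeasurableSet {ω | S ω = b})
    (H1 : ∀ i : Fin K,
      P ({ω | Y ω = i} ∩ {ω | Ybar ω = i} ∩ {ω | S ω = true})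
        = P ({ω | Ybar ω = i} ∩ {ω | S ω = true}))
    (H2 : P ({ω | Y ω = Ybar ω} ∩ {ω | S ω = false}) = 0) :
    ∀ ℓ : Fin K → ℝ,
      (∫ ω, (if S ω = true then ℓ (Ybar ω)
          else ∑ i ∈ Finset.univ.filter (fun i : Fin K => i ≠ Ybar ω),
            (P[{ω' | Y ω' = i} | {ω' | Ybar ω' = Ybar ω} ∩ {ω' | S ω' = false}]).toReal
              * ℓ i) ∂P)
        = ∑ i : Fin K, (P {ω | Y ω = i}).toReal * ℓ i := by
  intro ℓ
  let Z : Ω → Fin K × Bool := fun ω => (Ybar ω, S ω)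
  have hcell (j : Fin K) (b : Bool) : Z ⁻¹' {(j, b)} = {ω | Ybar ω = j} ∩ {ω | S ω = b} :=
    Set.ext fun _ => Prod.ext_iff
  have hcell_meas (j : Fin K) (b : Bool) : MeasurableSet (Z ⁻¹' {(j, b)}) := by
    rw [hcell]
    exact (hYbar j).inter (hS b)
  have hZ : Measurable Z := measurable_to_countable' fun z => hcell_meas z.1 z.2
  refine integral_comp_eq_sum_of_cell_averages hZ (fun z => if z.2 = true then ℓ z.1
    else ∑ i ∈ Finset.univ.filter (fun i : Fin K => i ≠ z.1),
      (P[{ω' | Y ω' = i} | {ω' | Ybar ω' = z.1} ∩ {ω' | S ω' = false}]).toReal * ℓ i) ℓ ?_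
  rintro ⟨j, (_ | _)⟩
  · simp only [Bool.false_eq_true, if_false]
    rw [← hcell, Finset.mul_sum]
    simp only [← mul_assoc, measureReal_mul_toReal_cond (hcell_meas j false)]
    refine Finset.sum_filter_of_ne fun i _ hi => ?_
    rintro rfl
    refine hi (mul_eq_zero_of_left ((measureReal_eq_zero_iff).2 (measure_mono_null ?_ H2)) _)
    rintro ω ⟨hYω, hZω⟩
    obtain ⟨hYbarω, hSω⟩ := Prod.ext_iff.1 hZω
    exact ⟨hYω.trans hYbarω.symm, hSω⟩
  · rw [hcell, if_pos rfl]
    exact (sum_measureReal_inter_mul_of_measure_inter_eq (hY j)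
      (by rw [← Set.inter_assoc]; exact H1 j) ℓ).symm

theorem stmt_8 {Ω : Type*} [MeasurableSpace Ω] (P : Measure Ω) [IsProbabilityMeasure P]
    {K : ℕ} (hK : 2 ≤ K) (Y Ybar : Ω → Fin K) (S : Ω → Bool)
    (hY : ∀ i : Fin K, MeasurableSet {ω | Y ω = i})
    (hYbar : ∀ i : Fin K, MeasurableSet {ω | Ybar ω = i})
    (hS : ∀ b : Bool, MeasurableSet {ω | S ω = b})
    (H1 : ∀ i : Fin K,
      P ({ω | Y ω = i} ∩ {ω | Ybar ω = i} ∩ {ω | S ω = true})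
        = P ({ω | Ybar ω = i} ∩ {ω | S ω = true}))
    (H2 : P ({ω | Y ω = Ybar ω} ∩ {ω | S ω = false}) = 0) :
    ∀ ℓ : Fin K → ℝ,
      (∫ ω, (if S ω = true then ℓ (Ybar ω)
          else ∑ i ∈ Finset.univ.filter (fun i : Fin K => i ≠ Ybar ω),
            (P[{ω' | Y ω' = i} | {ω' | Ybar ω' = Ybar ω} ∩ {ω' | S ω' = false}]).toReal
              * ℓ i) ∂P)
        = ∑ i : Fin K, (P {ω | Y ω = i}).toReal * ℓ i :=
  stmt_8_general P Y Ybar S hY hYbar hS H1 H2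
end
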